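/- Let G be a finite group, u ∈ Aut(G), n ∈ G, and set u' = u ∘ ι_n where ι_n is conjugation by n. Define R : G → G by R(x) = x·u(n^{-1}). Then R is a bijection satisfying R(x ▹_u y) = R(x) ▹_{u'} R(y) for all x, y ∈ G, where x ▹_u y = x·u(y·x^{-1}) and x ▹_{u'} y = x·u'(y·x^{-1}). In particular R restricts to a rack isomorphism from each twisted conjugacy class O^{G,u}_x onto the twisted conjugacy class O^{G,u'}_{R(x)}. -/
import Mathlib


/-- The rack operation `y ▹ z = y · u(z · y⁻¹)` on a group `G` with `u ∈ Aut(G)`. -/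
def twOp {G : Type*} [Group G] (u : G ≃* G) (y z : G) : G :=
  y * u (z * y⁻¹)

/-- The twisted conjugacy class `O^{G,u}_x`, the orbit of `x` under the action
`y ⇀_u x = y · x · u(y)⁻¹`. -/
def twClass {G : Type*} [Group G] (u : G ≃* G) (x : G) : Set G :=
  {y | ∃ g : G, g * x * (u g)⁻¹ = y}

/-- Let `u' = u ∘ ι_n` and `R(x) = x · u(n⁻¹)`. Then `R` is a bijection of `G`
intertwining `▹_u` and `▹_{u'}`; in particular it restricts to a rack isomorphism
from `O^{G,u}_x` onto `O^{G,u'}_{R(x)}`. -/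
theorem twClass_iso_of_inner {G : Type*} [Group G] [Fintype G] (u : G ≃* G) (n : G)
    (u' : G ≃* G) (hu' : ∀ g : G, u' g = u (n * g * n⁻¹)) :
    Function.Bijective (fun x : G => x * u n⁻¹) ∧
    (∀ x y : G, twOp u x y * u n⁻¹ = twOp u' (x * u n⁻¹) (y * u n⁻¹)) ∧
    (∀ x : G, Set.BijOn (fun z : G => z * u n⁻¹) (twClass u x) (twClass u' (x * u n⁻¹))) := by
  refine ⟨⟨fun a b h => by simpa using mul_right_cancel h,
    fun y => ⟨y * (u n⁻¹)⁻¹, by group⟩⟩, ?_, ?_⟩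
  · intro x y
    simp only [twOp, hu', mul_inv_rev, map_mul, map_inv]
    group
  · intro x
    refine ⟨?_, fun a _ b _ h => by simpa using mul_right_cancel h, ?_⟩
    · rintro z ⟨g, rfl⟩
      exact ⟨g, by simp only [hu', mul_inv_rev, map_mul, map_inv]; group⟩
    · rintro y ⟨g, rfl⟩
      refine ⟨g * x * (u g)⁻¹, ⟨g, rfl⟩, ?_⟩
      simp only [hu', mul_inv_rev, map_mul, map_inv]
      group
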